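/- Fix ε∈(0,1/6) and λ∈(0,1/2), set I₋₁:=[0,1/3−ε], I₀:=[1/3+ε,2/3−ε], I₁:=[2/3+ε,1], and let (f,g) ∈ 𝒜 satisfy the inclusion property (f(I₋₁)⊆I₋₁, f(I₀)⊆int(I₋₁), f(I₁)⊆int(I₀), g(I₁)⊆I₁, g(I₀)⊆int(I₁), g(I₋₁)⊆int(I₀)) and the strong uniform contraction property (f′(x)<λ and g′(x)<λ for all x∈I₋₁∪I₀∪I₁). Then the unique minimal set K of ⟨f,g⟩₊ has Lebesgue measure zero; in particular K has empty interior. -/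

import Mathlib

open Set Function MeasureTheory

noncomputable section

namespace IFSPaper

/-- The closed unit interval `I = [0,1]` as a subset of `ℝ`. -/
def unitI : Set ℝ := Set.Icc 0 1

/-- Membership in the class `𝒜`: `f, g : I → I` are `C¹` diffeomorphisms onto their
images with `f 0 = 0`, `g 1 = 1`, `f x < x < g x` on `(0,1)` and `0 < g 0 < f 1 < 1`. -/
structure MemA (f g : ℝ → ℝ) : Prop where
  f_maps : Set.MapsTo f unitI unitI
  g_maps : Set.MapsTo g unitI unitI
  f_c1 : ContDiff ℝ 1 f
  g_c1 : ContDiff ℝ 1 g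
  f_inj : Set.InjOn f unitI
  g_inj : Set.InjOn g unitI
  f_deriv_ne : ∀ x ∈ unitI, deriv f x ≠ 0
  g_deriv_ne : ∀ x ∈ unitI, deriv g x ≠ 0
  f_zero : f 0 = 0
  g_one : g 1 = 1
  f_lt_id : ∀ x ∈ Set.Ioo (0:ℝ) 1, f x < x
  id_lt_g : ∀ x ∈ Set.Ioo (0:ℝ) 1, x < g x
  g0_pos : 0 < g 0
  g0_lt_f1 : g 0 < f 1
  f1_lt_one : f 1 < 1

/-- The element of the semigroup `⟨f,g⟩₊` associated to a word in the two generators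
(`true ↦ f`, `false ↦ g`). -/
def word (f g : ℝ → ℝ) : List Bool → ℝ → ℝ
  | [] => id
  | b :: t => (if b then f else g) ∘ word f g t

/-- The semigroup orbit `O₊(x) = {φ x : φ ∈ ⟨f,g⟩₊}` of a point `x`. -/
def orbitP (f g : ℝ → ℝ) (x : ℝ) : Set ℝ :=
  {y | ∃ w : List Bool, w ≠ [] ∧ word f g w x = y}

/-- `K` is a minimal set for the action of `⟨f,g⟩₊` on `I`. -/
def IsMinimalSet (f g : ℝ → ℝ) (K : Set ℝ) : Prop :=
  K.Nonempty ∧ K ⊆ unitI ∧ ∀ x ∈ K, closure (orbitP f g x) = K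

/-- The overlapping region `W = [g 0, f 1]`. -/
def ovW (f g : ℝ → ℝ) : Set ℝ := Set.Icc (g 0) (f 1)

/-- The fundamental domain `Fₙ = [f^[n+1] 1, f^[n] 1]`. -/
def Fint (f : ℝ → ℝ) (n : ℕ) : Set ℝ := Set.Icc (f^[n+1] 1) (f^[n] 1)

/-- The fundamental domain `Gₙ = [g^[n] 0, g^[n+1] 0]`. -/
def Gint (g : ℝ → ℝ) (n : ℕ) : Set ℝ := Set.Icc (g^[n] 0) (g^[n+1] 0)

/-- Single overlapping property `So`: `f² 1 < g 0` and `f 1 < g² 0`. -/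
def So (f g : ℝ → ℝ) : Prop := f (f 1) < g 0 ∧ f 1 < g (g 0)

/-- A (nonempty) closed bounded interval. -/
def IsClosedInterval (A : Set ℝ) : Prop := ∃ a b : ℝ, a ≤ b ∧ A = Set.Icc a b

/-- A closed bounded interval with nonempty interior. -/
def IsNondegClosedInterval (A : Set ℝ) : Prop := ∃ a b : ℝ, a < b ∧ A = Set.Icc a b

/-- A nonempty open bounded interval. -/
def IsOpenInterval (J : Set ℝ) : Prop := ∃ a b : ℝ, a < b ∧ J = Set.Ioo a b

/-- Hole property `Ho` witnessed by the pair of holes `(Hf, Hg)`. -/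
def HoleAt (f g : ℝ → ℝ) (Hf Hg : Set ℝ) : Prop :=
  IsNondegClosedInterval Hf ∧ IsNondegClosedInterval Hg ∧
  Hf ⊆ interior (Fint f 1 \ ovW f g) ∧
  Hg ⊆ interior (Gint g 1 \ ovW f g) ∧
  g '' Hf = Hg ∧ f '' Hg = Hf

/-- Hole property `Ho`. -/
def Ho (f g : ℝ → ℝ) : Prop := ∃ Hf Hg : Set ℝ, HoleAt f g Hf Hg

/-- The induced (first-return) map `𝓕 : F₁ \ {f 1} → G₁`,
`𝓕 x = g^[-n x] (f⁻¹ x)` where `n x` is least with `g^[-n x] (f⁻¹ x) ∈ G₁`. -/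
def calF (f g : ℝ → ℝ) (x : ℝ) : ℝ :=
  (Function.invFunOn g unitI)^[sInf {n : ℕ |
      (Function.invFunOn g unitI)^[n] (Function.invFunOn f unitI x) ∈ Gint g 1}]
    (Function.invFunOn f unitI x)

/-- The induced (first-return) map `𝓖 : G₁ \ {g 0} → F₁`. -/
def calG (f g : ℝ → ℝ) (x : ℝ) : ℝ :=
  (Function.invFunOn f unitI)^[sInf {n : ℕ |
      (Function.invFunOn f unitI)^[n] (Function.invFunOn g unitI x) ∈ Fint f 1}]
    (Function.invFunOn g unitI x)

/-- Eventual expansion property `Ee`: `𝓕` is uniformly expanding outside `Hf`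
and `𝓖` outside `Hg` (at all points where the derivative makes sense). -/
def Ee (f g : ℝ → ℝ) (Hf Hg : Set ℝ) : Prop :=
  ∃ μ : ℝ, 1 < μ ∧
    (∀ y ∈ Fint f 1 \ Hf, DifferentiableAt ℝ (calF f g) y → μ < deriv (calF f g) y) ∧
    (∀ y ∈ Gint g 1 \ Hg, DifferentiableAt ℝ (calG f g) y → μ < deriv (calG f g) y)

/-- The ruination region `R_f = 𝓕⁻¹(Hg) ⊆ F₁`. -/
def Rf (f g : ℝ → ℝ) (Hg : Set ℝ) : Set ℝ :=
  {x | x ∈ Fint f 1 \ {f 1} ∧ calF f g x ∈ Hg}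

/-- The ruination region `R_g = 𝓖⁻¹(Hf) ⊆ G₁`. -/
def Rg (f g : ℝ → ℝ) (Hf : Set ℝ) : Set ℝ :=
  {x | x ∈ Gint g 1 \ {g 0} ∧ calG f g x ∈ Hf}

/-- Castration property `Ca`: `W ⊆ int R_f ∪ int R_g`. -/
def Ca (f g : ℝ → ℝ) (Hf Hg : Set ℝ) : Prop :=
  ovW f g ⊆ interior (Rf f g Hg) ∪ interior (Rg f g Hf)

/-- Membership in the class `𝒞` with the given holes `(Hf, Hg)`:
`(f,g) ∈ 𝒜` together with `So`, `Ho`, `Ee` and `Ca`. -/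
def MemC (f g : ℝ → ℝ) (Hf Hg : Set ℝ) : Prop :=
  MemA f g ∧ So f g ∧ HoleAt f g Hf Hg ∧ Ee f g Hf Hg ∧ Ca f g Hf Hg

/-- The interval `I₋₁ = [0, 1/3 - ε]` of the appendix example. -/
def Im1 (ε : ℝ) : Set ℝ := Set.Icc 0 (1/3 - ε)

/-- The interval `I₀ = [1/3 + ε, 2/3 - ε]` of the appendix example. -/
def Iz (ε : ℝ) : Set ℝ := Set.Icc (1/3 + ε) (2/3 - ε)

/-- The interval `I₁ = [2/3 + ε, 1]` of the appendix example. -/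
def Ip1 (ε : ℝ) : Set ℝ := Set.Icc (2/3 + ε) 1

/-- The inclusion property of the appendix example. -/
def InclusionProp (f g : ℝ → ℝ) (ε : ℝ) : Prop :=
  f '' Im1 ε ⊆ Im1 ε ∧ f '' Iz ε ⊆ interior (Im1 ε) ∧ f '' Ip1 ε ⊆ interior (Iz ε) ∧
  g '' Ip1 ε ⊆ Ip1 ε ∧ g '' Iz ε ⊆ interior (Ip1 ε) ∧ g '' Im1 ε ⊆ interior (Iz ε)

/-- The strong uniform contraction property of the appendix example. -/
def StrongContraction (f g : ℝ → ℝ) (ε lam : ℝ) : Prop :=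
  ∀ x ∈ Im1 ε ∪ Iz ε ∪ Ip1 ε, deriv f x < lam ∧ deriv g x < lam

/-! The closed set `Λ = I₋₁ ∪ I₀ ∪ I₁` is forward invariant under `f` and `g`, and it contains
`0 = lim fⁿ(x)`, which lies in every minimal set; hence `K ⊆ Λ`, where both maps contract by `λ`.
Being an orbit closure, `K ⊆ f(K) ∪ g(K)`, so `μ K ≤ 2λ μ K` with `2λ < 1` and `μ K < ∞`. -/

open Filter Topology
open scoped ENNReal

theorem deriv_pos_of_forall_deriv_ne_zero {F : ℝ → ℝ} {a b : ℝ} (hF : Differentiable ℝ F)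
    (hne : ∀ x ∈ Icc a b, deriv F x ≠ 0) (hab : a ≤ b) (hlt : F a < F b) :
    ∀ x ∈ Icc a b, 0 < deriv F x := by
  refine (hasDerivWithinAt_forall_lt_or_forall_gt_of_forall_ne (convex_Icc a b)
    (fun x _ => (hF x).hasDerivAt.hasDerivWithinAt) hne).resolve_left fun hneg => ?_
  have hanti : StrictAntiOn F (Icc a b) :=
    strictAntiOn_of_deriv_neg (convex_Icc a b) hF.continuous.continuousOn
      fun x hx => hneg x (interior_subset hx)
  have hab' : a < b := hab.lt_of_ne (by rintro rfl; exact hlt.false)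
  exact (hanti ⟨le_rfl, hab⟩ ⟨hab, le_rfl⟩ hab').asymm hlt

theorem tendsto_iterate_nhds_zero {F : ℝ → ℝ} (hF : Continuous F)
    (hmaps : MapsTo F (Icc 0 1) (Icc 0 1)) (h0 : F 0 = 0) (hlt : ∀ x ∈ Ioc (0:ℝ) 1, F x < x)
    {x : ℝ} (hx : x ∈ Icc (0:ℝ) 1) : Tendsto (fun n => F^[n] x) atTop (𝓝 0) := by
  have hle : ∀ y ∈ Icc (0:ℝ) 1, F y ≤ y := by
    rintro y ⟨hy0, hy1⟩
    rcases hy0.eq_or_lt with rfl | hy0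
    · exact h0.le
    · exact (hlt y ⟨hy0, hy1⟩).le
  have hmem : ∀ n, F^[n] x ∈ Icc (0:ℝ) 1 := fun n => hmaps.iterate n hx
  have hanti : Antitone fun n => F^[n] x := antitone_nat_of_succ_le fun n => by
    rw [iterate_succ_apply']
    exact hle _ (hmem n)
  have hconv := tendsto_atTop_ciInf hanti ⟨0, by rintro _ ⟨n, rfl⟩; exact (hmem n).1⟩
  set L := ⨅ n, F^[n] x
  have hL : L ∈ Icc (0:ℝ) 1 := isClosed_Icc.mem_of_tendsto hconv (Eventually.of_forall hmem)
  have hfix : IsFixedPt F L := isFixedPt_of_tendsto_iterate hconv hF.continuousAt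
  suffices L = 0 from this ▸ hconv
  by_contra hL0
  exact (hlt L ⟨hL.1.lt_of_ne (Ne.symm hL0), hL.2⟩).ne hfix

theorem volume_image_le_of_abs_deriv_le {F F' : ℝ → ℝ} {s : Set ℝ} {c : ℝ}
    (hs : MeasurableSet s) (hF : ∀ x ∈ s, HasDerivWithinAt F (F' x) s x)
    (hc : ∀ x ∈ s, |F' x| ≤ c) : volume (F '' s) ≤ ENNReal.ofReal c * volume s :=
  calc volume (F '' s) ≤ ∫⁻ x in s, ENNReal.ofReal |F' x| := by
        simpa only [ContinuousLinearMap.det_toSpanSingleton] using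
          addHaar_image_le_lintegral_abs_det_fderiv volume hs
            fun x hx => (hF x hx).hasFDerivWithinAt
    _ ≤ ∫⁻ _ in s, ENNReal.ofReal c :=
        setLIntegral_mono' hs fun x hx => ENNReal.ofReal_le_ofReal (hc x hx)
    _ = ENNReal.ofReal c * volume s := setLIntegral_const s _

theorem eq_zero_of_le_mul_of_lt_one {a c : ℝ≥0∞} (h : a ≤ c * a) (hc : c < 1)
    (ha : a ≠ ∞) : a = 0 := by
  by_contra ha0
  have hca : a * c < a * 1 := ENNReal.mul_lt_mul_right ha0 ha hc
  rw [mul_one, mul_comm] at hca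
  exact (h.trans_lt hca).false

variable {f g : ℝ → ℝ}

theorem word_replicate_true (n : ℕ) (x : ℝ) : word f g (List.replicate n true) x = f^[n] x := by
  induction n with
  | zero => rfl
  | succ n ih => simp [List.replicate_succ, word, ih, iterate_succ_apply']

theorem mapsTo_word {s : Set ℝ} (hf : MapsTo f s s) (hg : MapsTo g s s) :
    ∀ w : List Bool, MapsTo (word f g w) s s
  | [] => mapsTo_id s
  | true :: w => hf.comp (mapsTo_word hf hg w)
  | false :: w => hg.comp (mapsTo_word hf hg w)

theorem orbitP_subset {s : Set ℝ} (hf : MapsTo f s s) (hg : MapsTo g s s) {x : ℝ}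
    (hx : x ∈ s) : orbitP f g x ⊆ s := by
  rintro _ ⟨w, -, rfl⟩
  exact mapsTo_word hf hg w hx

namespace IsMinimalSet

variable {K : Set ℝ} (hK : IsMinimalSet f g K)
include hK

theorem isClosed : IsClosed K := by
  obtain ⟨x, hx⟩ := hK.1
  exact hK.2.2 x hx ▸ isClosed_closure

theorem isCompact : IsCompact K :=
  isCompact_Icc.of_isClosed_subset hK.isClosed hK.2.1

theorem word_mem {x : ℝ} (hx : x ∈ K) (w : List Bool) : word f g w x ∈ K := by
  rcases eq_or_ne w [] with rfl | hw
  · exact hx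
  · exact hK.2.2 x hx ▸ subset_closure ⟨w, hw, rfl⟩

theorem subset_of_mapsTo {s : Set ℝ} (hs : IsClosed s) (hf : MapsTo f s s) (hg : MapsTo g s s)
    {x : ℝ} (hxK : x ∈ K) (hxs : x ∈ s) : K ⊆ s :=
  hK.2.2 x hxK ▸ closure_minimal (orbitP_subset hf hg hxs) hs

theorem subset_image_union (hf : Continuous f) (hg : Continuous g) : K ⊆ f '' K ∪ g '' K := by
  obtain ⟨x, hx⟩ := hK.1
  have horbit : orbitP f g x ⊆ f '' K ∪ g '' K := by
    rintro _ ⟨_ | ⟨b, w⟩, hw, rfl⟩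
    · exact absurd rfl hw
    · cases b
      · exact Or.inr ⟨_, hK.word_mem hx w, rfl⟩
      · exact Or.inl ⟨_, hK.word_mem hx w, rfl⟩
  exact (hK.2.2 x hx).symm.subset.trans
    (closure_minimal horbit ((hK.isCompact.image hf).union (hK.isCompact.image hg)).isClosed)

end IsMinimalSet

namespace MemA

variable (hA : MemA f g)
include hA

theorem deriv_f_pos : ∀ x ∈ unitI, 0 < deriv f x :=
  deriv_pos_of_forall_deriv_ne_zero (hA.f_c1.differentiable one_ne_zero) hA.f_deriv_ne
    zero_le_one (by rw [hA.f_zero]; exact hA.g0_pos.trans hA.g0_lt_f1)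

theorem deriv_g_pos : ∀ x ∈ unitI, 0 < deriv g x :=
  deriv_pos_of_forall_deriv_ne_zero (hA.g_c1.differentiable one_ne_zero) hA.g_deriv_ne
    zero_le_one (by rw [hA.g_one]; exact hA.g0_lt_f1.trans hA.f1_lt_one)

theorem f_lt_self : ∀ x ∈ Ioc (0:ℝ) 1, f x < x := by
  rintro x ⟨hx0, hx1⟩
  rcases hx1.eq_or_lt with rfl | hx1
  · exact hA.f1_lt_one
  · exact hA.f_lt_id x ⟨hx0, hx1⟩

theorem zero_mem_of_isMinimalSet {K : Set ℝ} (hK : IsMinimalSet f g K) : (0:ℝ) ∈ K := by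
  obtain ⟨x, hx⟩ := hK.1
  refine hK.isClosed.mem_of_tendsto
    (tendsto_iterate_nhds_zero hA.f_c1.continuous hA.f_maps hA.f_zero hA.f_lt_self (hK.2.1 hx))
    (Eventually.of_forall fun n => ?_)
  rw [← word_replicate_true (g := g)]
  exact hK.word_mem hx _

end MemA

namespace InclusionProp

variable {ε : ℝ} (hinc : InclusionProp f g ε)
include hinc

theorem mapsTo_f : MapsTo f (Im1 ε ∪ Iz ε ∪ Ip1 ε) (Im1 ε ∪ Iz ε ∪ Ip1 ε) := by
  rintro x ((hx | hx) | hx)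
  · exact Or.inl (Or.inl (hinc.1 ⟨x, hx, rfl⟩))
  · exact Or.inl (Or.inl (interior_subset (hinc.2.1 ⟨x, hx, rfl⟩)))
  · exact Or.inl (Or.inr (interior_subset (hinc.2.2.1 ⟨x, hx, rfl⟩)))

theorem mapsTo_g : MapsTo g (Im1 ε ∪ Iz ε ∪ Ip1 ε) (Im1 ε ∪ Iz ε ∪ Ip1 ε) := by
  rintro x ((hx | hx) | hx)
  · exact Or.inl (Or.inr (interior_subset (hinc.2.2.2.2.2 ⟨x, hx, rfl⟩)))
  · exact Or.inr (interior_subset (hinc.2.2.2.2.1 ⟨x, hx, rfl⟩))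
  · exact Or.inr (hinc.2.2.2.1 ⟨x, hx, rfl⟩)

end InclusionProp

theorem appendix_minimal_set_measure_zero_general (ε lam : ℝ)
    (hε : ε < 1/6) (hlam : lam < 1/2)
    (f g : ℝ → ℝ) (K : Set ℝ) (hA : MemA f g)
    (hinc : InclusionProp f g ε) (hcon : StrongContraction f g ε lam)
    (hK : IsMinimalSet f g K) :
    volume K = 0 ∧ interior K = ∅ := by
  have hKΛ : K ⊆ Im1 ε ∪ Iz ε ∪ Ip1 ε :=
    hK.subset_of_mapsTo ((isClosed_Icc.union isClosed_Icc).union isClosed_Icc) hinc.mapsTo_f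
      hinc.mapsTo_g (hA.zero_mem_of_isMinimalSet hK) (Or.inl (Or.inl ⟨le_rfl, by linarith⟩))
  have hcontract : ∀ F : ℝ → ℝ, ContDiff ℝ 1 F → (∀ x ∈ unitI, 0 < deriv F x) →
      (∀ x ∈ K, deriv F x < lam) → volume (F '' K) ≤ ENNReal.ofReal lam * volume K :=
    fun F hF hpos hlt => volume_image_le_of_abs_deriv_le hK.isClosed.measurableSet
      (fun x _ => (hF.differentiable one_ne_zero x).hasDerivAt.hasDerivWithinAt)
      fun x hx => (abs_of_pos (hpos x (hK.2.1 hx))).trans_le (hlt x hx).le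
  have hvol : volume K ≤ 2 * ENNReal.ofReal lam * volume K :=
    calc volume K ≤ volume (f '' K) + volume (g '' K) :=
          (measure_mono (hK.subset_image_union hA.f_c1.continuous hA.g_c1.continuous)).trans
            (measure_union_le _ _)
      _ ≤ ENNReal.ofReal lam * volume K + ENNReal.ofReal lam * volume K :=
          add_le_add (hcontract f hA.f_c1 hA.deriv_f_pos fun x hx => (hcon x (hKΛ hx)).1)
            (hcontract g hA.g_c1 hA.deriv_g_pos fun x hx => (hcon x (hKΛ hx)).2)
      _ = 2 * ENNReal.ofReal lam * volume K := by ring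
  have hlam2 : 2 * ENNReal.ofReal lam < 1 := by
    rw [← ENNReal.ofReal_ofNat 2, ← ENNReal.ofReal_mul zero_le_two, ← ENNReal.ofReal_one]
    exact (ENNReal.ofReal_lt_ofReal_iff one_pos).2 (by linarith)
  have h0 := eq_zero_of_le_mul_of_lt_one hvol hlam2 hK.isCompact.measure_lt_top.ne
  exact ⟨h0, Measure.interior_eq_empty_of_null h0⟩

/-- appendix example: under the inclusion property and the strong uniform
contraction property, the minimal set `K` has Lebesgue measure zero; in particular it has
empty interior. -/
theorem appendix_minimal_set_measure_zero (ε lam : ℝ)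
    (hε0 : 0 < ε) (hε : ε < 1/6) (hlam0 : 0 < lam) (hlam : lam < 1/2)
    (f g : ℝ → ℝ) (K : Set ℝ) (hA : MemA f g)
    (hinc : InclusionProp f g ε) (hcon : StrongContraction f g ε lam)
    (hK : IsMinimalSet f g K) :
    volume K = 0 ∧ interior K = ∅ :=
  appendix_minimal_set_measure_zero_general ε lam hε hlam f g K hA hinc hcon hK

end IFSPaper
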